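/- Concentration of powers of the regularized degree matrix (Lemma on L^α versus Λ^α, rescaled form): For each fixed α > 0 there exist constants C₂ > 0 and c₂ > 0, depending only on C₀ and α, such that whenever additionally ξ/(q·β_n) ≤ c₂, then for all sufficiently large n, with probability at least 1 − e^{−c₂ξ}, max_{1≤i≤n} |(L_i^α − Λ_i^α)/Λ_i^α| ≤ C₂·ξ/(q·β_n), where L_i and Λ_i denote the i-th diagonal entries of L and Λ. -/

import Mathlib

open MeasureTheory Matrix Filter ProbabilityTheory

noncomputable section

/-- The parameter `ξ = (log n)^{1+a₀}`. -/
def xiPar (n : ℕ) (a₀ : ℝ) : ℝ := Real.log n ^ ((1 : ℝ) + a₀)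

/-- Data of the rescaled model at dimension `n`: sample space, probability measure,
sparsity parameter `q`, regularization parameters `τ`, `λ`, noise matrix `W`,
signal matrix `H`, rank `K`, number of strong spikes `K₀`, population spiked
eigenvalues `δ` / eigenvectors `v` (1-based indexing), empirical eigenvalues
`δhat` / eigenvectors `vhat` (1-based indexing), and the QVE measures `ν`. -/
structure Mdl (n : ℕ) where
  Ω : Type
  mΩ : MeasurableSpace Ω
  μ : @MeasureTheory.Measure Ω mΩ
  q : ℝ
  τ : Fin n → ℝ
  lam : Fin n → ℝ
  W : Ω → Matrix (Fin n) (Fin n) ℝ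
  H : Matrix (Fin n) (Fin n) ℝ
  K : ℕ
  K₀ : ℕ
  δ : ℕ → ℝ
  v : ℕ → Fin n → ℝ
  δhat : Ω → ℕ → ℝ
  vhat : Ω → ℕ → Fin n → ℝ
  ν : Fin n → MeasureTheory.Measure ℝ

attribute [instance] Mdl.mΩ

namespace Mdl

variable {n : ℕ} (M : Mdl n)

/-- entry variances `s_{ij} = E[W_{ij}²]` -/
def s (i j : Fin n) : ℝ := ∫ ω, (M.W ω i j) ^ 2 ∂M.μ

/-- `θ_i = q⁻¹ ∑_j H_{ij}` -/
def θ (i : Fin n) : ℝ := (∑ j, M.H i j) / M.q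

/-- `θ̄ = n⁻¹ ∑_i θ_i` -/
def θbar : ℝ := (∑ i, M.θ i) / n

/-- `β_n = min_i (θ_i + τ_i θ̄ + λ_i/q²)` -/
def β : ℝ := ⨅ i : Fin n, (M.θ i + M.τ i * M.θbar + M.lam i / M.q ^ 2)

/-- degrees `d_i = ∑_j X̃_{ij}` -/
def d (ω : M.Ω) (i : Fin n) : ℝ := ∑ j, (M.H i j + M.W ω i j)

/-- `d̄ = n⁻¹ ∑_j d_j` -/
def dbar (ω : M.Ω) : ℝ := (∑ j, M.d ω j) / n

/-- diagonal entries of `L = (qβ)⁻¹ diag(d_i + τ_i d̄ + λ_i/q)` -/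
def Ld (ω : M.Ω) (i : Fin n) : ℝ :=
  (M.d ω i + M.τ i * M.dbar ω + M.lam i / M.q) / (M.q * M.β)

/-- diagonal entries of `Λ = E[L]` -/
def Λd (i : Fin n) : ℝ := (M.θ i + M.τ i * M.θbar + M.lam i / M.q ^ 2) / M.β

/-- `W̄ = Λ^{-α} W Λ^{-α}` -/
def Wb (α : ℝ) (ω : M.Ω) : Matrix (Fin n) (Fin n) ℝ :=
  Matrix.diagonal (fun i => M.Λd i ^ (-α)) * M.W ω * Matrix.diagonal (fun i => M.Λd i ^ (-α))

/-- the generalized Laplacian `X = L^{-α} X̃ L^{-α}` -/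
def X (α : ℝ) (ω : M.Ω) : Matrix (Fin n) (Fin n) ℝ :=
  Matrix.diagonal (fun i => M.Ld ω i ^ (-α)) * (M.H + M.W ω) *
    Matrix.diagonal (fun i => M.Ld ω i ^ (-α))

/-- `(L/Λ)^a` -/
def LΛpow (a : ℝ) (ω : M.Ω) : Matrix (Fin n) (Fin n) ℝ :=
  Matrix.diagonal fun i => (M.Ld ω i / M.Λd i) ^ a

/-- `(L−Λ)/Λ` -/
def ELL (ω : M.Ω) : Matrix (Fin n) (Fin n) ℝ :=
  Matrix.diagonal fun i => (M.Ld ω i - M.Λd i) / M.Λd i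

/-- `‖V‖_max` -/
def Vmax : ℝ := ⨆ k : {x : ℕ // x ∈ Finset.Icc 1 M.K}, ⨆ i : Fin n, |M.v (k : ℕ) i|

/-- `‖v_k‖_∞` -/
def vinf (k : ℕ) : ℝ := ⨆ i : Fin n, |M.v k i|

/-- `ψ_n(δ_k)` -/
def ψ (a₀ : ℝ) (k : ℕ) : ℝ :=
  1 / (|M.δ k| * M.β) + xiPar n a₀ / (M.q * M.β ^ 2) + M.Vmax

/-- `𝔐 = max{1, max_i ∑_j Λ_i^{-2α} s_{ij} Λ_j^{-2α}}` -/
def frakM (α : ℝ) : ℝ :=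
  max 1 (⨆ i : Fin n, M.Λd i ^ (-(2 * α)) * ∑ j, M.Λd j ^ (-(2 * α)) * M.s i j)

/-- real Stieltjes transform `M_i(x) = ∫ (t−x)⁻¹ dν_i(t)` -/
def Mre (i : Fin n) (x : ℝ) : ℝ := ∫ t, (t - x)⁻¹ ∂(M.ν i)

/-- complex Stieltjes transform `M_i(z)` -/
def Mc (i : Fin n) (z : ℂ) : ℂ := ∫ t, ((t : ℂ) - z)⁻¹ ∂(M.ν i)

/-- `Υ(x) = diag(M_i(x))` (real argument) -/
def Υ (x : ℝ) : Matrix (Fin n) (Fin n) ℝ := Matrix.diagonal fun i => M.Mre i x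

/-- `Υ(z)` (complex argument) -/
def Υc (z : ℂ) : Matrix (Fin n) (Fin n) ℂ := Matrix.diagonal fun i => M.Mc i z

/-- `Υ'(x)`, entrywise derivative -/
def Υd (x : ℝ) : Matrix (Fin n) (Fin n) ℝ := Matrix.diagonal fun i => deriv (M.Mre i) x

/-- `V₋ₖ`: the spiked eigenvector matrix with the `k`-th column removed -/
def Vm (k : ℕ) : Matrix (Fin n) {x : ℕ // x ∈ (Finset.Icc 1 M.K).erase k} ℝ :=
  Matrix.of fun i j => M.v (j : ℕ) i

/-- `Δ₋ₖ` -/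
def Dm (k : ℕ) :
    Matrix {x : ℕ // x ∈ (Finset.Icc 1 M.K).erase k}
      {x : ℕ // x ∈ (Finset.Icc 1 M.K).erase k} ℝ :=
  Matrix.diagonal fun j => M.δ (j : ℕ)

/-- `Δ₋ₖ⁻¹ + V₋ₖᵀ Υ(x) V₋ₖ` -/
def denom (k : ℕ) (x : ℝ) :
    Matrix {x : ℕ // x ∈ (Finset.Icc 1 M.K).erase k}
      {x : ℕ // x ∈ (Finset.Icc 1 M.K).erase k} ℝ :=
  (M.Dm k)⁻¹ + (M.Vm k)ᵀ * M.Υ x * M.Vm k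

/-- `Υ_k(x) = Υ(x) − Υ(x)V₋ₖ(Δ₋ₖ⁻¹+V₋ₖᵀΥ(x)V₋ₖ)⁻¹V₋ₖᵀΥ(x)` -/
def Υk (k : ℕ) (x : ℝ) : Matrix (Fin n) (Fin n) ℝ :=
  M.Υ x - M.Υ x * M.Vm k * (M.denom k x)⁻¹ * (M.Vm k)ᵀ * M.Υ x

/-- `v_kᵀ Υ_k(x) v_k` -/
def Υkq (k : ℕ) (x : ℝ) : ℝ := M.v k ⬝ᵥ (M.Υk k x).mulVec (M.v k)

/-- the master equation
`1 + δ_k v_kᵀΥ(x)v_k − δ_k v_kᵀΥ(x)V₋ₖ(Δ₋ₖ⁻¹+V₋ₖᵀΥ(x)V₋ₖ)⁻¹V₋ₖᵀΥ(x)v_k` -/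
def masterF (k : ℕ) (x : ℝ) : ℝ :=
  1 + M.δ k * (M.v k ⬝ᵥ (M.Υ x).mulVec (M.v k)) -
    M.δ k * (M.v k ⬝ᵥ
      (M.Υ x * M.Vm k * (M.denom k x)⁻¹ * (M.Vm k)ᵀ * M.Υ x).mulVec (M.v k))

/-- `Ĩ_k` -/
def Itil (ε₀ : ℝ) (k : ℕ) : Set ℝ :=
  {x | |M.δ k| / (1 + ε₀ / 2) ≤ |x| ∧ |x| ≤ (1 + ε₀ / 2) * |M.δ k|}

/-- `‖uᵀV₋ₖ‖` -/
def uVmNorm (k : ℕ) (u : Fin n → ℝ) : ℝ :=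
  Real.sqrt (∑ j : {x : ℕ // x ∈ (Finset.Icc 1 M.K).erase k}, (∑ i, u i * M.v (j : ℕ) i) ^ 2)

/-- `v_kᵀ((L−Λ)/Λ)v_k` -/
def qf1 (k : ℕ) (ω : M.Ω) : ℝ := M.v k ⬝ᵥ (M.ELL ω).mulVec (M.v k)

/-- `v_kᵀ((L−Λ)/Λ)²v_k` -/
def qf2 (k : ℕ) (ω : M.Ω) : ℝ := M.v k ⬝ᵥ (M.ELL ω * M.ELL ω).mulVec (M.v k)

/-- `v_kᵀ((L−Λ)/Λ)W̄v_k` -/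
def qf3 (α : ℝ) (k : ℕ) (ω : M.Ω) : ℝ := M.v k ⬝ᵥ (M.ELL ω * M.Wb α ω).mulVec (M.v k)

/-- `v_kᵀW̄v_k` -/
def qfW (α : ℝ) (k : ℕ) (ω : M.Ω) : ℝ := M.v k ⬝ᵥ (M.Wb α ω).mulVec (M.v k)

/-- `v_kᵀW̄²v_k` -/
def qfW2 (α : ℝ) (k : ℕ) (ω : M.Ω) : ℝ :=
  M.v k ⬝ᵥ (M.Wb α ω * M.Wb α ω).mulVec (M.v k)

/-- `Λ_j` accessed with a (0-based) natural-number index -/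
def ΛdN (j : ℕ) : ℝ := if h : j < n then M.Λd ⟨j, h⟩ else 0

/-- `L_j` accessed with a (0-based) natural-number index -/
def LdN (ω : M.Ω) (j : ℕ) : ℝ := if h : j < n then M.Ld ω ⟨j, h⟩ else 0

/-- entry of `v_k` accessed with a (0-based) natural-number index -/
def vN (k j : ℕ) : ℝ := if h : j < n then M.v k ⟨j, h⟩ else 0

/-- entry of `v̂_k` accessed with a (0-based) natural-number index -/
def vhatN (ω : M.Ω) (k j : ℕ) : ℝ := if h : j < n then M.vhat ω k ⟨j, h⟩ else 0

/-- `s_{jl}` with first index a (0-based) natural number -/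
def sN (j : ℕ) (l : Fin n) : ℝ := if h : j < n then M.s ⟨j, h⟩ l else 0

/-- the complexified matrix `W̄ − z (L/Λ)^{2α}` -/
def Amat (α : ℝ) (ω : M.Ω) (z : ℂ) : Matrix (Fin n) (Fin n) ℂ :=
  (M.Wb α ω).map (fun x : ℝ => (x : ℂ)) - z • (M.LΛpow (2 * α) ω).map (fun x : ℝ => (x : ℂ))

/-- Basic hypotheses of the rescaled model. -/
structure HBase (M : Mdl n) (α C₀ a₀ : ℝ) : Prop where
  hn : 2 ≤ n
  prob : IsProbabilityMeasure M.μ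
  hq1 : xiPar n a₀ ^ (3 : ℕ) ≤ M.q
  hq2 : M.q ≤ C₀ * Real.sqrt n
  hτ0 : ∀ i, 0 ≤ M.τ i
  hτ1 : ∀ i, M.τ i ≤ C₀
  hlam0 : ∀ i, 0 ≤ M.lam i
  hlam1 : ∀ i, M.lam i ≤ C₀ * M.q ^ 2
  hWsym : ∀ ω, (M.W ω)ᵀ = M.W ω
  hWmeas : ∀ i j, Measurable fun ω => M.W ω i j
  hWindep : iIndepFun
    (fun (p : {p : Fin n × Fin n // p.1 ≤ p.2}) => fun ω => M.W ω p.1.1 p.1.2) M.μ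
  hWint : ∀ (i j : Fin n) (p : ℕ), (p : ℝ) ≤ xiPar n a₀ →
    Integrable (fun ω => |M.W ω i j| ^ p) M.μ
  hWmean : ∀ i j, ∫ ω, M.W ω i j ∂M.μ = 0
  hWvar : ∀ i j, M.s i j ≤ C₀ / n
  hWmom : ∀ (i j : Fin n) (p : ℕ), 3 ≤ p → (p : ℝ) ≤ xiPar n a₀ →
    ∫ ω, |M.W ω i j| ^ p ∂M.μ ≤ C₀ ^ p / (n * M.q ^ ((p : ℝ) - 2))
  hHsym : M.Hᵀ = M.H
  hHnn : ∀ i j, 0 ≤ M.H i j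
  hK : 1 ≤ M.K
  hrank : M.H.rank = M.K
  hθ : ∀ i, M.θ i ≤ C₀
  hβ : 0 < M.β
  hLpos : ∀ᵐ ω ∂M.μ, ∀ i, 0 < M.Ld ω i

/-- QVE hypotheses. -/
structure HQVE (M : Mdl n) (α : ℝ) : Prop where
  hνprob : ∀ i, IsProbabilityMeasure (M.ν i)
  hνsupp : ∀ i,
    (M.ν i) (Set.Icc (-(2 * Real.sqrt (M.frakM α))) (2 * Real.sqrt (M.frakM α)))ᶜ = 0
  hQVE : ∀ z : ℂ, 2 * Real.sqrt (M.frakM α) < ‖z‖ → ∀ i,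
    (M.Mc i z)⁻¹ = -z - ((M.Λd i ^ (-(2 * α)) : ℝ) : ℂ) *
      ∑ j, ((M.Λd j ^ (-(2 * α)) : ℝ) : ℂ) * (M.s i j : ℂ) * M.Mc j z

/-- Spike hypotheses: population and empirical eigendecompositions. -/
structure HSpike (M : Mdl n) (α : ℝ) : Prop where
  hK₀1 : 1 ≤ M.K₀
  hK₀2 : M.K₀ ≤ M.K
  hdecomp :
    Matrix.diagonal (fun i => M.Λd i ^ (-α)) * M.H * Matrix.diagonal (fun i => M.Λd i ^ (-α)) =
      ∑ k ∈ Finset.Icc 1 M.K, M.δ k • Matrix.vecMulVec (M.v k) (M.v k)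
  hortho : ∀ k ∈ Finset.Icc 1 M.K, ∀ l ∈ Finset.Icc 1 M.K,
    M.v k ⬝ᵥ M.v l = if k = l then 1 else 0
  hδne : ∀ k ∈ Finset.Icc 1 M.K, M.δ k ≠ 0
  hδmono : ∀ k ∈ Finset.Icc 1 M.K, ∀ l ∈ Finset.Icc 1 M.K, k ≤ l → |M.δ l| ≤ |M.δ k|
  hδzero : ∀ k, M.K < k → M.δ k = 0
  hδhatmeas : ∀ k, Measurable fun ω => M.δhat ω k
  hvhatmeas : ∀ k i, Measurable fun ω => M.vhat ω k i
  hhat : ∀ᵐ ω ∂M.μ,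
    (∀ k ∈ Finset.Icc 1 n, (M.X α ω).mulVec (M.vhat ω k) = M.δhat ω k • M.vhat ω k) ∧
    (∀ k ∈ Finset.Icc 1 n, ∀ l ∈ Finset.Icc 1 n,
      M.vhat ω k ⬝ᵥ M.vhat ω l = if k = l then 1 else 0) ∧
    (∀ k ∈ Finset.Icc 1 n, ∀ l ∈ Finset.Icc 1 n, k ≤ l → |M.δhat ω l| ≤ |M.δhat ω k|)

end Mdl

/-- "with high probability" for a sequence of events. -/
def WHP (Ms : (n : ℕ) → Mdl n) (E : (n : ℕ) → Set (Ms n).Ω) : Prop :=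
  ∀ D : ℝ, 0 < D → ∃ N : ℕ, ∀ n, N ≤ n →
    1 - ENNReal.ofReal ((n : ℝ) ^ (-D)) ≤ (Ms n).μ (E n)

/-- The asymptotic setting: a sequence of models satisfying the model hypotheses and the
asymptotic conditions (i)–(iv). -/
structure Asym (Ms : (n : ℕ) → Mdl n) (α C₀ a₀ ε₀ : ℝ) : Prop where
  hα : 0 < α
  hC₀ : 1 ≤ C₀
  ha₀ : 0 < a₀
  hε₀ : 0 < ε₀
  base : ∀ n, 2 ≤ n → (Ms n).HBase α C₀ a₀
  qve : ∀ n, 2 ≤ n → (Ms n).HQVE α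
  spike : ∀ n, 2 ≤ n → (Ms n).HSpike α
  hq : Tendsto (fun n => (Ms n).q / Real.log n ^ (4 : ℕ)) atTop atTop
  hδK₀ : Tendsto (fun n => |(Ms n).δ (Ms n).K₀|) atTop atTop
  hgap : ∀ n, 2 ≤ n → ∀ k ∈ Finset.Icc 1 (Ms n).K₀,
    (1 + ε₀) * |(Ms n).δ (k + 1)| < |(Ms n).δ k|
  hcond : Tendsto
    (fun n => ((Ms n).K : ℝ) * xiPar n a₀ * (Ms n).ψ a₀ (Ms n).K₀ / (Ms n).q) atTop (nhds 0)

/-- Limit locations: `t_k ∈ Ĩ_k` solves the master equation, for every `1 ≤ k ≤ K₀`. -/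
def LimLoc (Ms : (n : ℕ) → Mdl n) (ε₀ : ℝ) (t : (n : ℕ) → ℕ → ℝ) : Prop :=
  ∀ n, 2 ≤ n → ∀ k ∈ Finset.Icc 1 (Ms n).K₀,
    t n k ∈ (Ms n).Itil ε₀ k ∧ (Ms n).masterF k (t n k) = 0


/-!
Writing `Sᵢ = ∑ⱼ Wᵢⱼ`, one has `Lᵢ - Λᵢ = (Sᵢ + τᵢ S̄) / (qβ)` with `S̄ = n⁻¹ ∑ⱼ Sⱼ`, and `Λᵢ ≥ 1`
since `β` is the minimum of the numerators of the `Λᵢ`. So it suffices that all row sums are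
`O(ξ)`, after which `r ↦ r ^ α` is Lipschitz near `r = 1`. For an even `p ≈ ξ`, expanding
`E[Sᵢ ^ p]` over maps `Fin p → Fin n` kills every term in which some index occurs once, and each
remaining term is at most `C₀ ^ p n ^ (-#distinct indices)`; these weights sum to at most `p!`.
Markov's inequality and a union bound over the rows then give probability `≤ n e^{4 - 2ξ} ≤ e^{-ξ}`
for the event that some `|Sᵢ| ≥ e² C₀ ξ`.
-/

open Finset Nat Filter

lemma Real.abs_exp_sub_one_le_mul_exp_abs (x : ℝ) : |Real.exp x - 1| ≤ |x| * Real.exp |x| := by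
  rcases le_total 0 x with hx | hx
  · have h := Real.add_one_le_exp (-x)
    rw [Real.exp_neg] at h
    have hex := Real.exp_pos x
    rw [abs_of_nonneg hx, abs_of_nonneg (by linarith [Real.one_le_exp hx])]
    nlinarith [mul_inv_cancel₀ hex.ne']
  · rw [abs_of_nonpos hx, abs_of_nonpos (by linarith [Real.exp_le_one_iff.2 hx])]
    nlinarith [Real.add_one_le_exp x, Real.one_le_exp (neg_nonneg.2 hx)]

lemma Real.abs_log_le_two_mul_abs_sub_one {r : ℝ} (hr : |r - 1| ≤ 1 / 2) :
    |Real.log r| ≤ 2 * |r - 1| := by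
  obtain ⟨hr₁, hr₂⟩ := abs_le.1 hr
  have hr0 : 0 < r := by linarith
  have hlo := Real.one_sub_inv_le_log_of_pos hr0
  have hhi := Real.log_le_sub_one_of_pos hr0
  have hinv : r⁻¹ ≤ 2 := by rw [inv_le_comm₀ hr0 two_pos]; linarith
  rw [abs_le]
  constructor <;> cases abs_cases (r - 1) <;> nlinarith [mul_inv_cancel₀ hr0.ne']

lemma Real.abs_rpow_sub_one_le {r α : ℝ} (hα : 0 < α) (hr : |r - 1| ≤ 1 / 2) :
    |r ^ α - 1| ≤ 2 * α * Real.exp α * |r - 1| := by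
  have hr0 : 0 < r := by linarith [(abs_le.1 hr).1]
  have hlog := Real.abs_log_le_two_mul_abs_sub_one hr
  have hlogα : |Real.log r * α| ≤ α := by
    rw [abs_mul, abs_of_pos hα]; nlinarith
  calc |r ^ α - 1| = |Real.exp (Real.log r * α) - 1| := by rw [Real.rpow_def_of_pos hr0]
    _ ≤ |Real.log r * α| * Real.exp |Real.log r * α| := Real.abs_exp_sub_one_le_mul_exp_abs _
    _ ≤ (2 * |r - 1| * α) * Real.exp α := by
        gcongr
        rw [abs_mul, abs_of_pos hα]; gcongr
    _ = 2 * α * Real.exp α * |r - 1| := by ring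

lemma exists_even_nat_between {x : ℝ} (hx : 0 ≤ x) :
    ∃ p : ℕ, Even p ∧ x - 2 ≤ p ∧ (p : ℝ) ≤ x := by
  refine ⟨2 * ⌊x / 2⌋₊, even_two_mul _, ?_, ?_⟩ <;> push_cast
  · linarith [Nat.lt_floor_add_one (x / 2)]
  · linarith [Nat.floor_le (div_nonneg hx two_pos.le)]

lemma natCast_mul_div_pow_le_exp_neg {n p : ℕ} {C ξ : ℝ} (hC : 0 < C) (hn : 0 < n)
    (hp₁ : ξ - 2 ≤ p) (hp₂ : (p : ℝ) ≤ ξ) (hlog : Real.log n + 4 ≤ ξ) :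
    n * (C ^ p * p ! / (Real.exp 2 * C * ξ) ^ p) ≤ Real.exp (-ξ) := by
  have hξ : 0 < ξ := by linarith [Real.log_nonneg (one_le_cast.2 hn)]
  have hfact : C ^ p * p ! ≤ (C * ξ) ^ p := by
    rw [mul_pow]
    gcongr
    exact (cast_le.2 p.factorial_le_pow).trans_eq (cast_pow p p) |>.trans (by gcongr)
  calc n * (C ^ p * p ! / (Real.exp 2 * C * ξ) ^ p)
      ≤ Real.exp (Real.log n) * ((C * ξ) ^ p / (Real.exp 2 * C * ξ) ^ p) := by
        rw [Real.exp_log (cast_pos.2 hn)]; gcongr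
    _ = Real.exp (Real.log n + p * (-2)) := by
        rw [← div_pow, Real.exp_add, Real.exp_nat_mul, Real.exp_neg]
        field_simp
    _ ≤ Real.exp (-ξ) := Real.exp_le_exp.2 (by linarith)

lemma eventually_log_add_four_le_xiPar {a₀ : ℝ} (ha₀ : 0 < a₀) :
    ∀ᶠ n : ℕ in atTop, Real.log n + 4 ≤ xiPar n a₀ := by
  have hlog : Tendsto (fun n : ℕ => Real.log n) atTop atTop :=
    Real.tendsto_log_atTop.comp tendsto_natCast_atTop_atTop
  filter_upwards [hlog.eventually_ge_atTop 4,
    ((tendsto_rpow_atTop ha₀).comp hlog).eventually_ge_atTop 2] with n h4 h2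
  have : xiPar n a₀ = Real.log n * Real.log n ^ a₀ := by
    rw [xiPar, Real.rpow_add (by linarith), Real.rpow_one]
  simp only [Function.comp] at h2
  nlinarith

lemma xiPar_pos {n : ℕ} (hn : 2 ≤ n) (a₀ : ℝ) : 0 < xiPar n a₀ :=
  Real.rpow_pos_of_pos (Real.log_pos (by exact_mod_cast hn)) _

lemma Finset.image_univ_cons {ι : Type*} [DecidableEq ι] {p : ℕ} (j : ι) (g : Fin p → ι) :
    univ.image (Fin.cons j g : Fin (p + 1) → ι) = insert j (univ.image g) := by
  ext x
  simp [Fin.exists_fin_succ, eq_comm]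

section Moments

variable {Ω ι : Type*} [MeasurableSpace Ω] {μ : Measure Ω} [Fintype ι] [DecidableEq ι]

lemma sum_pow_card_insert_le {ε : ℝ} (hε : 0 ≤ ε) (hcard : Fintype.card ι * ε ≤ 1)
    (s : Finset ι) : ∑ j, ε ^ #(insert j s) ≤ (#s + 1) * ε ^ #s := by
  rw [← sum_filter_add_sum_filter_not univ (· ∈ s)]
  have hin : ∑ j with j ∈ s, ε ^ #(insert j s) = #s * ε ^ #s := by
    rw [sum_congr rfl fun j hj => by rw [insert_eq_of_mem (mem_filter.1 hj).2], sum_const,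
      filter_mem_eq_inter, univ_inter, nsmul_eq_mul]
  have hout : ∑ j with j ∉ s, ε ^ #(insert j s) ≤ ε ^ #s := calc
    _ = #{j | j ∉ s} * (ε ^ #s * ε) := by
      rw [sum_congr rfl fun j hj => by rw [card_insert_of_notMem (mem_filter.1 hj).2, pow_succ],
        sum_const, nsmul_eq_mul]
    _ ≤ Fintype.card ι * (ε ^ #s * ε) := by
      gcongr
      exact_mod_cast card_le_univ _
    _ ≤ ε ^ #s := by nlinarith [pow_nonneg hε #s]
  linarith

lemma sum_pow_card_image_le_factorial {ε : ℝ} (hε : 0 ≤ ε) (hcard : Fintype.card ι * ε ≤ 1) :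
    ∀ p : ℕ, ∑ g : Fin p → ι, ε ^ #(univ.image g) ≤ p !
  | 0 => by simp
  | p + 1 => calc
      ∑ g : Fin (p + 1) → ι, ε ^ #(univ.image g)
          = ∑ g : Fin p → ι, ∑ j, ε ^ #(insert j (univ.image g)) := by
        rw [← (Fin.consEquiv fun _ => ι).sum_comp, Fintype.sum_prod_type, sum_comm]
        simp [Fin.consEquiv, image_univ_cons]
      _ ≤ ∑ g : Fin p → ι, (p + 1) * ε ^ #(univ.image g) := by
        gcongr with g
        refine (sum_pow_card_insert_le hε hcard _).trans ?_
        gcongr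
        exact_mod_cast card_image_le.trans (card_univ.trans (Fintype.card_fin p)).le
      _ ≤ (p + 1) * p ! := by
        rw [← mul_sum]
        gcongr
        exact sum_pow_card_image_le_factorial hε hcard p
      _ = (p + 1 : ℕ)! := by push_cast [factorial_succ]; ring

variable [IsProbabilityMeasure μ]

lemma one_sub_le_measure_of_measure_compl_le {s : Set Ω} {ε : ENNReal} (h : μ sᶜ ≤ ε) :
    1 - ε ≤ μ s := by
  rw [tsub_le_iff_right, ← measure_univ (μ := μ)]
  exact (measure_univ_le_add_compl s).trans (add_le_add le_rfl h)

lemma abs_integral_pow_le {Y : Ω → ℝ} {A ε : ℝ} {p k : ℕ} (hA : 0 ≤ A) (hε : 0 ≤ ε)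
    (hk : k ≤ p) (hmean : ∫ ω, Y ω ∂μ = 0)
    (hmom : ∀ k, 2 ≤ k → k ≤ p → ∫ ω, |Y ω| ^ k ∂μ ≤ A ^ k * ε) :
    |∫ ω, Y ω ^ k ∂μ| ≤ A ^ k * if k = 0 then 1 else ε := by
  match k with
  | 0 => simp
  | 1 => simpa [hmean] using mul_nonneg hA hε
  | k + 2 =>
    calc |∫ ω, Y ω ^ (k + 2) ∂μ| ≤ ∫ ω, |Y ω| ^ (k + 2) ∂μ := by
          simpa only [Real.norm_eq_abs, abs_pow] using
            norm_integral_le_integral_norm (fun ω => Y ω ^ (k + 2))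
      _ ≤ A ^ (k + 2) * ε := hmom _ (by omega) hk
      _ = _ := by simp

lemma integral_sum_pow_le {X : ι → Ω → ℝ} {A ε : ℝ} {p : ℕ} (hA : 0 ≤ A) (hε : 0 ≤ ε)
    (hcard : Fintype.card ι * ε ≤ 1) (hX : iIndepFun X μ) (hLp : ∀ j, MemLp (X j) p μ)
    (hmean : ∀ j, ∫ ω, X j ω ∂μ = 0)
    (hmom : ∀ j k, 2 ≤ k → k ≤ p → ∫ ω, |X j ω| ^ k ∂μ ≤ A ^ k * ε) :
    ∫ ω, (∑ j, X j ω) ^ p ∂μ ≤ A ^ p * p ! := by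
  obtain rfl | hp := eq_or_ne p 0
  · simp
  have hexpand : ∀ ω, (∑ j, X j ω) ^ p = ∑ g : Fin p → ι, ∏ m, X (g m) ω := fun ω => by
    rw [sum_pow', Fintype.piFinset_univ]
  have hint : ∀ g : Fin p → ι, Integrable (fun ω => ∏ m, X (g m) ω) μ := fun g => by
    have h := MemLp.prod' (s := univ) fun m _ => hLp (g m)
    rwa [sum_const, Finset.card_univ, Fintype.card_fin, nsmul_eq_mul,
      ENNReal.mul_inv_cancel (by simpa) (by simp), inv_one, memLp_one_iff_integrable] at h
  have hterm : ∀ g : Fin p → ι, ∫ ω, ∏ m, X (g m) ω ∂μ ≤ A ^ p * ε ^ #(univ.image g) := by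
    intro g
    set c : ι → ℕ := fun j => #{m | g m = j}
    have hc : ∀ ω, ∏ m, X (g m) ω = ∏ j, X j ω ^ c j := fun ω => by
      simp_rw [c, ← prod_const, prod_fiberwise_of_maps_to' (fun _ _ => mem_univ _)]
    have hsum : ∑ j, c j = p := by
      simpa using (card_eq_sum_card_fiberwise (f := g) (s := univ) fun _ _ => mem_univ _).symm
    have hsupp : ({j | ¬ c j = 0} : Finset ι) = univ.image g := by
      ext j; simp [c]
    have hc_le : ∀ j, c j ≤ p := fun j => (card_filter_le _ _).trans (by simp)
    have hindep : iIndepFun (fun j ω => X j ω ^ c j) μ :=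
      hX.comp (fun j x => x ^ c j) fun j => measurable_id.pow_const _
    simp_rw [hc]
    rw [hindep.integral_fun_prod_eq_prod_integral fun j => ((hLp j).1.pow (c j))]
    calc ∏ j, ∫ ω, X j ω ^ c j ∂μ ≤ ∏ j, |∫ ω, X j ω ^ c j ∂μ| := by
          rw [← abs_prod]; exact le_abs_self _
      _ ≤ ∏ j, A ^ c j * if c j = 0 then 1 else ε := by
          gcongr with j
          exact abs_integral_pow_le hA hε (hc_le j) (hmean j) (hmom j)
      _ = A ^ p * ε ^ #(univ.image g) := by
          rw [prod_mul_distrib, prod_pow_eq_pow_sum, hsum, prod_ite, prod_const_one, prod_const,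
            one_mul, hsupp]
  calc ∫ ω, (∑ j, X j ω) ^ p ∂μ = ∑ g : Fin p → ι, ∫ ω, ∏ m, X (g m) ω ∂μ := by
        simp_rw [hexpand]; exact integral_finsetSum _ fun g _ => hint g
    _ ≤ ∑ g : Fin p → ι, A ^ p * ε ^ #(univ.image g) := sum_le_sum fun g _ => hterm g
    _ ≤ A ^ p * p ! := by
        rw [← mul_sum]
        gcongr
        exact sum_pow_card_image_le_factorial hε hcard p

lemma measure_le_abs_sum_le {X : ι → Ω → ℝ} {A ε T : ℝ} {p : ℕ} (hp : Even p) (hT : 0 < T)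
    (hA : 0 ≤ A) (hε : 0 ≤ ε) (hcard : Fintype.card ι * ε ≤ 1) (hX : iIndepFun X μ)
    (hLp : ∀ j, MemLp (X j) p μ) (hmean : ∀ j, ∫ ω, X j ω ∂μ = 0)
    (hmom : ∀ j k, 2 ≤ k → k ≤ p → ∫ ω, |X j ω| ^ k ∂μ ≤ A ^ k * ε) :
    μ {ω | T ≤ |∑ j, X j ω|} ≤ ENNReal.ofReal (A ^ p * p ! / T ^ p) := by
  have hint : Integrable (fun ω => (∑ j, X j ω) ^ p) μ := by
    simpa [Real.norm_eq_abs, hp.pow_abs] using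
      (memLp_finsetSum' univ fun j _ => hLp j).integrable_norm_pow'
  have hmarkov := mul_meas_ge_le_integral_of_nonneg
    (ae_of_all _ fun ω => hp.pow_nonneg (∑ j, X j ω)) hint (T ^ p)
  calc μ {ω | T ≤ |∑ j, X j ω|} ≤ μ {ω | T ^ p ≤ (∑ j, X j ω) ^ p} := measure_mono fun ω hω => by
        simpa [hp.pow_abs] using pow_le_pow_left₀ hT.le hω p
    _ = ENNReal.ofReal (μ.real {ω | T ^ p ≤ (∑ j, X j ω) ^ p}) :=
        (ofReal_measureReal (measure_ne_top _ _)).symm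
    _ ≤ ENNReal.ofReal (A ^ p * p ! / T ^ p) := by
        refine ENNReal.ofReal_le_ofReal ?_
        rw [le_div_iff₀' (pow_pos hT p)]
        exact hmarkov.trans (integral_sum_pow_le hA hε hcard hX hLp hmean hmom)

end Moments

namespace Mdl

variable {n : ℕ} (M : Mdl n) {α C₀ a₀ : ℝ}

lemma q_pos (hb : M.HBase α C₀ a₀) : 0 < M.q :=
  (pow_pos (xiPar_pos hb.hn a₀) 3).trans_le hb.hq1

lemma one_le_Λd (hβ : 0 < M.β) (i : Fin n) : 1 ≤ M.Λd i :=
  (one_le_div hβ).2 (ciInf_le (Set.finite_range _).bddBelow i)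

lemma Ld_sub_Λd (hq : M.q ≠ 0) (hβ : M.β ≠ 0) (ω : M.Ω) (i : Fin n) :
    M.Ld ω i - M.Λd i =
      (∑ j, M.W ω i j + M.τ i * ((∑ j, ∑ l, M.W ω j l) / n)) / (M.q * M.β) := by
  have hd : ∀ i, M.d ω i = M.q * M.θ i + ∑ j, M.W ω i j := fun i => by
    simp only [d, θ, sum_add_distrib]; field_simp
  have hdbar : M.dbar ω = M.q * M.θbar + (∑ j, ∑ l, M.W ω j l) / n := by
    simp only [dbar, θbar, hd, sum_add_distrib, ← mul_sum]; ring
  simp only [Ld, Λd, hd, hdbar]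
  field_simp
  ring

lemma abs_Ld_sub_Λd_le (hb : M.HBase α C₀ a₀) (hC₀ : 1 ≤ C₀) {ω : M.Ω} {T : ℝ}
    (hS : ∀ i, |∑ j, M.W ω i j| ≤ T) (i : Fin n) :
    |M.Ld ω i - M.Λd i| ≤ 2 * C₀ * T / (M.q * M.β) := by
  have hq : 0 < M.q := M.q_pos hb
  have hqβ : 0 < M.q * M.β := mul_pos hq hb.hβ
  have hn : (0 : ℝ) < n := by exact_mod_cast (by linarith [hb.hn] : 0 < n)
  have hT : 0 ≤ T := (abs_nonneg _).trans (hS i)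
  have havg : |(∑ j, ∑ l, M.W ω j l) / n| ≤ T := by
    rw [abs_div, Nat.abs_cast, div_le_iff₀ hn]
    calc |∑ j, ∑ l, M.W ω j l| ≤ ∑ j : Fin n, T :=
          (abs_sum_le_sum_abs _ _).trans (sum_le_sum fun j _ => hS j)
      _ = T * n := by simp [mul_comm]
  rw [Ld_sub_Λd M hq.ne' hb.hβ.ne', abs_div, abs_of_pos hqβ]
  gcongr
  calc |∑ j, M.W ω i j + M.τ i * ((∑ j, ∑ l, M.W ω j l) / n)|
        ≤ |∑ j, M.W ω i j| + M.τ i * |(∑ j, ∑ l, M.W ω j l) / n| :=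
        (abs_add_le _ _).trans_eq (by rw [abs_mul, abs_of_nonneg (hb.hτ0 i)])
    _ ≤ T + C₀ * T := by gcongr; exacts [hS i, hb.hτ1 i]
    _ ≤ 2 * C₀ * T := by nlinarith

lemma abs_Ld_rpow_sub_le (hb : M.HBase α C₀ a₀) (hC₀ : 1 ≤ C₀) (hα : 0 < α) {ω : M.Ω}
    (hL : ∀ i, 0 < M.Ld ω i) {T : ℝ} (hS : ∀ i, |∑ j, M.W ω i j| ≤ T)
    (hT : 2 * C₀ * T / (M.q * M.β) ≤ 1 / 2) (i : Fin n) :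
    |(M.Ld ω i ^ α - M.Λd i ^ α) / M.Λd i ^ α|
      ≤ 2 * α * Real.exp α * (2 * C₀ * T / (M.q * M.β)) := by
  have hΛ := M.one_le_Λd hb.hβ i
  have hΛ0 : 0 < M.Λd i := one_pos.trans_le hΛ
  have hr : |M.Ld ω i / M.Λd i - 1| ≤ 2 * C₀ * T / (M.q * M.β) := by
    rw [div_sub_one hΛ0.ne', abs_div, abs_of_pos hΛ0]
    exact (div_le_self (abs_nonneg _) hΛ).trans (M.abs_Ld_sub_Λd_le hb hC₀ hS i)
  rw [sub_div, div_self (Real.rpow_pos_of_pos hΛ0 α).ne', ← Real.div_rpow (hL i).le hΛ0.le]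
  exact (Real.abs_rpow_sub_one_le hα (hr.trans hT)).trans (by gcongr)

lemma iIndepFun_W_row (hb : M.HBase α C₀ a₀) (i : Fin n) :
    iIndepFun (fun j ω => M.W ω i j) M.μ := by
  let e : Fin n → {p : Fin n × Fin n // p.1 ≤ p.2} := fun j => ⟨(min i j, max i j), min_le_max⟩
  have he : e.Injective := fun a b hab => by
    simp only [e, Subtype.mk.injEq, Prod.mk.injEq] at hab
    rw [Fin.ext_iff]
    have := Fin.ext_iff.1 hab.1
    have := Fin.ext_iff.1 hab.2
    simp only [Fin.coe_min, Fin.coe_max] at *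
    omega
  convert hb.hWindep.precomp he using 2 with j
  funext ω
  rcases le_total i j with h | h
  · simp [e, h]
  · simp only [e, min_eq_right h, max_eq_left h]
    exact congrFun (congrFun (hb.hWsym ω) j) i

lemma integral_abs_W_pow_le (hb : M.HBase α C₀ a₀) (hC₀ : 1 ≤ C₀) (hq : 1 ≤ M.q) {k : ℕ}
    (hk : 2 ≤ k) (hkξ : (k : ℝ) ≤ xiPar n a₀) (i j : Fin n) :
    ∫ ω, |M.W ω i j| ^ k ∂M.μ ≤ C₀ ^ k * (1 / n) := by
  rcases hk.eq_or_lt with rfl | hk3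
  · simp only [sq_abs]
    calc M.s i j ≤ C₀ / n := hb.hWvar i j
      _ ≤ C₀ ^ 2 * (1 / n) := by rw [mul_one_div]; gcongr; nlinarith
  · refine (hb.hWmom i j k hk3 hkξ).trans ?_
    have hn : (0 : ℝ) < n := by exact_mod_cast (by linarith [hb.hn] : 0 < n)
    have hk3' : (3 : ℝ) ≤ k := by exact_mod_cast hk3
    rw [mul_one_div]
    exact div_le_div_of_nonneg_left (by positivity) hn
      (le_mul_of_one_le_right hn.le (Real.one_le_rpow hq (by linarith)))

lemma measure_exists_le_abs_rowSum_le (hb : M.HBase α C₀ a₀) (hC₀ : 1 ≤ C₀) {p : ℕ}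
    (hp : Even p) (hp2 : 2 ≤ p) (hpξ : (p : ℝ) ≤ xiPar n a₀) {T : ℝ} (hT : 0 < T) :
    M.μ {ω | ∃ i, T ≤ |∑ j, M.W ω i j|} ≤ ENNReal.ofReal (n * (C₀ ^ p * p ! / T ^ p)) := by
  have := hb.prob
  have hp2' : (2 : ℝ) ≤ p := by exact_mod_cast hp2
  have hq : 1 ≤ M.q := (one_le_pow₀ (by linarith)).trans hb.hq1
  have hLp : ∀ i j, MemLp (fun ω => M.W ω i j) p M.μ := fun i j => by
    refine (integrable_norm_rpow_iff (hb.hWmeas i j).aestronglyMeasurable (by simp; omega)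
      (by simp)).1 ?_
    simpa [Real.norm_eq_abs] using hb.hWint i j p hpξ
  have hrow : ∀ i, M.μ {ω | T ≤ |∑ j, M.W ω i j|} ≤ ENNReal.ofReal (C₀ ^ p * p ! / T ^ p) :=
    fun i => measure_le_abs_sum_le hp hT (by positivity) (by positivity)
      (by rw [Fintype.card_fin, mul_one_div]; exact div_self_le_one _) (M.iIndepFun_W_row hb i)
      (hLp i) (hb.hWmean i)
      fun j k hk hkp => M.integral_abs_W_pow_le hb hC₀ hq hk ((cast_le.2 hkp).trans hpξ) i j
  rw [Set.ofPred_exists]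
  refine (measure_iUnion_fintype_le _ _).trans ((sum_le_sum fun i _ => hrow i).trans ?_)
  rw [sum_const, Finset.card_univ, Fintype.card_fin, nsmul_eq_mul, ENNReal.ofReal_mul (by simp),
    ENNReal.ofReal_natCast]

lemma measure_exists_le_abs_rowSum_le_exp_neg (hb : M.HBase α C₀ a₀) (hC₀ : 1 ≤ C₀)
    (hlog : Real.log n + 4 ≤ xiPar n a₀) :
    M.μ {ω | ∃ i, Real.exp 2 * C₀ * xiPar n a₀ ≤ |∑ j, M.W ω i j|}
      ≤ ENNReal.ofReal (Real.exp (-xiPar n a₀)) := by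
  have hξ := xiPar_pos hb.hn a₀
  have hlog0 : 0 ≤ Real.log n := Real.log_nonneg (by exact_mod_cast (by linarith [hb.hn] : 1 ≤ n))
  obtain ⟨p, hp, hp₁, hp₂⟩ := exists_even_nat_between hξ.le
  refine (M.measure_exists_le_abs_rowSum_le hb hC₀ hp
    (by exact_mod_cast (by linarith : (2 : ℝ) ≤ p)) hp₂ (by positivity)).trans ?_
  exact ENNReal.ofReal_le_ofReal (natCast_mul_div_pow_le_exp_neg (by linarith)
    (by linarith [hb.hn]) hp₁ hp₂ hlog)

end Mdl

/-- concentration of powers of the regularized degree matrix. -/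
theorem stmt_11 (C₀ α : ℝ) (hC₀ : 1 ≤ C₀) (hα : 0 < α) :
    ∃ C₂ c₂ : ℝ, 0 < C₂ ∧ 0 < c₂ ∧
      ∀ a₀ : ℝ, 0 < a₀ → ∃ N : ℕ,
        ∀ n : ℕ, N ≤ n → ∀ M : Mdl n, M.HBase α C₀ a₀ →
          xiPar n a₀ / (M.q * M.β) ≤ c₂ →
          1 - ENNReal.ofReal (Real.exp (-(c₂ * xiPar n a₀))) ≤
            M.μ {ω | ∀ i,
              |(M.Ld ω i ^ α - M.Λd i ^ α) / M.Λd i ^ α| ≤ C₂ * xiPar n a₀ / (M.q * M.β)} := by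
  set c₂ := 1 / (4 * Real.exp 2 * C₀ ^ 2)
  refine ⟨4 * α * Real.exp α * Real.exp 2 * C₀ ^ 2, c₂, by positivity, by positivity,
    fun a₀ ha₀ => ?_⟩
  obtain ⟨N, hN⟩ := eventually_atTop.1 (eventually_log_add_four_le_xiPar ha₀)
  refine ⟨N, fun n hn M hb hsmall => ?_⟩
  have := hb.prob
  set ξ := xiPar n a₀
  have hc₂ : c₂ ≤ 1 := by
    rw [div_le_one (by positivity)]; nlinarith [Real.add_one_le_exp 2, one_le_pow₀ (n := 2) hC₀]
  have hbad := (M.measure_exists_le_abs_rowSum_le_exp_neg hb hC₀ (hN n hn)).trans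
    (ENNReal.ofReal_le_ofReal (Real.exp_le_exp.2 (neg_le_neg
      (mul_le_of_le_one_left (xiPar_pos hb.hn a₀).le hc₂))))
  have hsmall' : 2 * C₀ * (Real.exp 2 * C₀ * ξ) / (M.q * M.β) ≤ 1 / 2 := calc
    _ = 2 * Real.exp 2 * C₀ ^ 2 * (ξ / (M.q * M.β)) := by ring
    _ ≤ 2 * Real.exp 2 * C₀ ^ 2 * c₂ := by gcongr
    _ = 1 / 2 := by simp only [c₂]; field_simp; ring
  refine one_sub_le_measure_of_measure_compl_le ((measure_mono_ae ?_).trans hbad)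
  filter_upwards [hb.hLpos] with ω hL hω
  refine not_forall_not.1 fun hS => hω fun i => ?_
  exact (M.abs_Ld_rpow_sub_le hb hC₀ hα hL (fun i => (not_le.1 (hS i)).le) hsmall' i).trans_eq
    (by ring)
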